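/- arXiv:1309.2236 — 3 statements merged into one kernel-verified Lean document; each statement's English description precedes it below -/
import Mathlib

section
/- Let A be the adjacency matrix of a simple undirected graph on n vertices, let δ ∈ [0,1] and β ≥ 0 with β·d_i ≤ 1 for every vertex i (d_i the degree of vertex i), and define f(P)_i = (1−δ)P_i + β(1−P_i)·(AP)_i and M = (1−δ)I + βA. If Q(0) ∈ [0,1]ⁿ and Q(t+1) = f(Q(t)) for all t ≥ 0, then Q(t) ∈ [0,1]ⁿ for every t, and Q(t)_i ≤ (Mᵗ Q(0))_i for every t ≥ 0 and every i; that is, the linearized system P(t) = MᵗP(0) provides a componentwise upper bound on the evolution of the nonlinear SIS system. -/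
open Matrix

/-- For the nonlinear mean-field SIS recursion `Q(t+1)ᵢ = (1-δ)Q(t)ᵢ + β(1-Q(t)ᵢ)(AQ(t))ᵢ`
on a simple undirected graph with adjacency matrix `A`, with `δ ∈ [0,1]`, `β ≥ 0`, and
`β·dᵢ ≤ 1` for every vertex `i`: if `Q(0) ∈ [0,1]ⁿ`, then `Q(t) ∈ [0,1]ⁿ` for every `t`,
and `Q(t)ᵢ ≤ (Mᵗ Q(0))ᵢ` for all `t` and `i`, where `M = (1-δ)I + βA`. -/
theorem sis_linear_upper_bound {n : ℕ}
    (G : SimpleGraph (Fin n)) [DecidableRel G.Adj]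
    (δ β : ℝ) (hδ : δ ∈ Set.Icc (0 : ℝ) 1) (hβ : 0 ≤ β)
    (hdeg : ∀ i : Fin n, β * G.degree i ≤ 1)
    (Q : ℕ → Fin n → ℝ) (hQ0 : ∀ i, Q 0 i ∈ Set.Icc (0 : ℝ) 1)
    (hrec : ∀ t i, Q (t + 1) i =
      (1 - δ) * Q t i + β * (1 - Q t i) * (G.adjMatrix ℝ).mulVec (Q t) i) :
    (∀ t i, Q t i ∈ Set.Icc (0 : ℝ) 1) ∧
    ∀ t i, Q t i ≤
      (((1 - δ) • (1 : Matrix (Fin n) (Fin n) ℝ) + β • G.adjMatrix ℝ) ^ t).mulVec (Q 0) i := by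
  obtain ⟨hδ0, hδ1⟩ := hδ
  set M : Matrix (Fin n) (Fin n) ℝ :=
    (1 - δ) • (1 : Matrix (Fin n) (Fin n) ℝ) + β • G.adjMatrix ℝ with hM
  have hMnn : ∀ i j, 0 ≤ M i j := by
    intro i j
    have h1 : (0:ℝ) ≤ (G.adjMatrix ℝ) i j := by
      rw [SimpleGraph.adjMatrix_apply]
      by_cases h : G.Adj i j <;> simp [h]
    simp only [hM, Matrix.add_apply, Matrix.smul_apply, Matrix.one_apply, smul_eq_mul]
    by_cases h : i = j
    · simp [h]; linarith
    · simp [h]; split <;> linarith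
  have hAQ : ∀ (v : Fin n → ℝ) i,
      (G.adjMatrix ℝ).mulVec v i = ∑ j ∈ G.neighborFinset i, v j := by
    intro v i; rw [SimpleGraph.adjMatrix_mulVec_apply]
  -- box invariance
  have hbox : ∀ t i, Q t i ∈ Set.Icc (0:ℝ) 1 := by
    intro t
    induction t with
    | zero => exact hQ0
    | succ t ih =>
      intro i
      obtain ⟨h0, h1⟩ := ih i
      have hAQ0 : 0 ≤ (G.adjMatrix ℝ).mulVec (Q t) i := by
        rw [hAQ]; exact Finset.sum_nonneg fun j _ => (ih j).1
      have hAQd : (G.adjMatrix ℝ).mulVec (Q t) i ≤ G.degree i := by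
        rw [hAQ]
        calc ∑ j ∈ G.neighborFinset i, Q t j ≤ ∑ j ∈ G.neighborFinset i, 1 :=
              Finset.sum_le_sum fun j _ => (ih j).2
          _ = G.degree i := by simp
      constructor
      · rw [hrec]
        have h2 : 0 ≤ (1 - δ) * Q t i := mul_nonneg (by linarith) h0
        have h3 : 0 ≤ β * (1 - Q t i) * (G.adjMatrix ℝ).mulVec (Q t) i :=
          mul_nonneg (mul_nonneg hβ (by linarith)) hAQ0
        linarith
      · rw [hrec]
        have h2 : β * (1 - Q t i) * (G.adjMatrix ℝ).mulVec (Q t) i ≤ (1 - Q t i) * 1 := by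
          calc β * (1 - Q t i) * (G.adjMatrix ℝ).mulVec (Q t) i
              = (1 - Q t i) * (β * (G.adjMatrix ℝ).mulVec (Q t) i) := by ring
            _ ≤ (1 - Q t i) * (β * G.degree i) := by
                apply mul_le_mul_of_nonneg_left _ (by linarith)
                exact mul_le_mul_of_nonneg_left hAQd hβ
            _ ≤ (1 - Q t i) * 1 := mul_le_mul_of_nonneg_left (hdeg i) (by linarith)
        nlinarith [h0, h1]
  refine ⟨hbox, ?_⟩
  intro t
  induction t with
  | zero => intro i; simp
  | succ t ih =>
    intro i
    have hAQ0 : 0 ≤ (G.adjMatrix ℝ).mulVec (Q t) i := by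
      rw [hAQ]; exact Finset.sum_nonneg fun j _ => (hbox t j).1
    have step : Q (t + 1) i ≤ M.mulVec (Q t) i := by
      rw [hrec]
      have hMv : M.mulVec (Q t) i
          = (1 - δ) * Q t i + β * (G.adjMatrix ℝ).mulVec (Q t) i := by
        simp [hM, Matrix.add_mulVec, Matrix.smul_mulVec, Matrix.one_mulVec,
          Pi.add_apply, Pi.smul_apply, smul_eq_mul]
      rw [hMv]
      nlinarith [mul_nonneg (mul_nonneg hβ (hbox t i).1) hAQ0]
    refine le_trans step ?_
    have hmono : M.mulVec (Q t) i ≤ M.mulVec ((M ^ t).mulVec (Q 0)) i := by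
      simp only [Matrix.mulVec, dotProduct]
      exact Finset.sum_le_sum fun j _ =>
        mul_le_mul_of_nonneg_left (ih j) (hMnn i j)
    refine le_trans hmono ?_
    rw [pow_succ', Matrix.mulVec_mulVec]
end

section
/- Let A be the adjacency matrix of a simple undirected graph on n vertices, let δ ∈ [0,1] and β ≥ 0 with β·d_i ≤ 1 for every vertex i, let M = (1−δ)I + βA, and suppose λ_max(M) < 1. If Q(0) ∈ [0,1]ⁿ and Q(t+1) = f(Q(t)) with f(P)_i = (1−δ)P_i + β(1−P_i)·(AP)_i, then Q(t) → 0 as t → ∞; i.e., if the linearized system is stable then the disease dies out in the nonlinear mean-field SIS model. -/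
open Matrix Filter

lemma pow_mulVec_eigen {n : ℕ} {M : Matrix (Fin n) (Fin n) ℝ} (hM : M.IsHermitian)
    (x : EuclideanSpace ℝ (Fin n)) (t : ℕ) :
    (M ^ t) *ᵥ x =
      ∑ i, (hM.eigenvectorBasis.repr x i * hM.eigenvalues i ^ t) • ⇑(hM.eigenvectorBasis i) := by
  induction t with
  | zero =>
    simp only [pow_zero, one_mulVec, mul_one]
    conv_lhs => rw [← hM.eigenvectorBasis.sum_repr x]
    simp
  | succ t ih =>
    rw [pow_succ', ← mulVec_mulVec, ih]
    have : (M *ᵥ ∑ i, (hM.eigenvectorBasis.repr x i * hM.eigenvalues i ^ t) • ⇑(hM.eigenvectorBasis i))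
        = ∑ i, (hM.eigenvectorBasis.repr x i * hM.eigenvalues i ^ t) • (M *ᵥ ⇑(hM.eigenvectorBasis i)) := by
      have := map_sum M.mulVecLin
        (fun i => (hM.eigenvectorBasis.repr x i * hM.eigenvalues i ^ t) • ⇑(hM.eigenvectorBasis i)) Finset.univ
      simp only [mulVecLin_apply] at this
      simpa only [mulVec_smul] using this
    rw [this]
    refine Finset.sum_congr rfl fun i _ => ?_
    rw [hM.mulVec_eigenvectorBasis, smul_smul, pow_succ]
    ring_nf

lemma my_sum_dotProduct {n : ℕ} {ι : Type*} (s : Finset ι) (f : ι → Fin n → ℝ) (v : Fin n → ℝ) :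
    (∑ i ∈ s, f i) ⬝ᵥ v = ∑ i ∈ s, f i ⬝ᵥ v := by
  simp only [dotProduct, Finset.sum_apply, Finset.sum_mul]
  exact Finset.sum_comm

lemma my_dotProduct_sum {n : ℕ} {ι : Type*} (s : Finset ι) (v : Fin n → ℝ) (f : ι → Fin n → ℝ) :
    v ⬝ᵥ (∑ i ∈ s, f i) = ∑ i ∈ s, v ⬝ᵥ f i := by
  simp only [dotProduct, Finset.sum_apply, Finset.mul_sum]
  exact Finset.sum_comm

lemma dot_eigen {n : ℕ} {M : Matrix (Fin n) (Fin n) ℝ} (hM : M.IsHermitian)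
    (c d : Fin n → ℝ) :
    (∑ i, c i • ⇑(hM.eigenvectorBasis i)) ⬝ᵥ (∑ i, d i • ⇑(hM.eigenvectorBasis i))
      = ∑ i, c i * d i := by
  have horth : ∀ i j, ⇑(hM.eigenvectorBasis i) ⬝ᵥ ⇑(hM.eigenvectorBasis j)
      = if i = j then (1:ℝ) else 0 := by
    intro i j
    have := orthonormal_iff_ite.mp hM.eigenvectorBasis.orthonormal i j
    simpa [PiLp.inner_apply, dotProduct, mul_comm] using this
  simp only [my_sum_dotProduct, my_dotProduct_sum, smul_dotProduct, dotProduct_smul, smul_eq_mul,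
    horth, mul_ite, mul_one, mul_zero, Finset.sum_ite_eq, Finset.sum_ite_eq', Finset.mem_univ,
    if_true]
  exact Finset.sum_congr rfl fun i _ => mul_comm _ _

lemma rayleigh_le {n : ℕ} {M : Matrix (Fin n) (Fin n) ℝ} (hM : M.IsHermitian)
    (y : Fin n → ℝ) :
    y ⬝ᵥ (M *ᵥ y) ≤ (⨆ i, hM.eigenvalues i) * (y ⬝ᵥ y) := by
  set c : Fin n → ℝ := fun i => hM.eigenvectorBasis.repr (WithLp.toLp 2 y) i with hc
  have hy : y = ∑ i, c i • ⇑(hM.eigenvectorBasis i) := by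
    simpa using pow_mulVec_eigen hM (WithLp.toLp 2 y) 0
  have hMy : M *ᵥ y = ∑ i, (c i * hM.eigenvalues i) • ⇑(hM.eigenvectorBasis i) := by
    simpa using pow_mulVec_eigen hM (WithLp.toLp 2 y) 1
  have h1 : y ⬝ᵥ (M *ᵥ y) = ∑ i, c i * (c i * hM.eigenvalues i) := by
    rw [hMy]; nth_rewrite 1 [hy]; exact dot_eigen hM _ _
  have h2 : y ⬝ᵥ y = ∑ i, c i * c i := by
    nth_rewrite 1 [hy]; nth_rewrite 1 [hy]; exact dot_eigen hM _ _
  rw [h1, h2, Finset.mul_sum]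
  refine Finset.sum_le_sum fun i _ => ?_
  have hb : hM.eigenvalues i ≤ ⨆ j, hM.eigenvalues j :=
    le_ciSup (Set.finite_range _).bddAbove i
  calc c i * (c i * hM.eigenvalues i) = hM.eigenvalues i * (c i * c i) := by ring
    _ ≤ (⨆ j, hM.eigenvalues j) * (c i * c i) :=
        mul_le_mul_of_nonneg_right hb (mul_self_nonneg _)

lemma eigen_abs_lt_one {n : ℕ} {M : Matrix (Fin n) (Fin n) ℝ} (hM : M.IsHermitian)
    (hMnn : ∀ i j, 0 ≤ M i j) (hstab : (⨆ i, hM.eigenvalues i) < 1) (k : Fin n) :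
    |hM.eigenvalues k| < 1 := by
  set v : Fin n → ℝ := ⇑(hM.eigenvectorBasis k) with hvdef
  have hv : v = ∑ i, (fun i => if i = k then (1:ℝ) else 0) i • ⇑(hM.eigenvectorBasis i) := by
    simp [ite_smul, Finset.sum_ite_eq', hvdef]
  have hvv : v ⬝ᵥ v = 1 := by
    rw [hv, dot_eigen hM]
    simp
  have hMv : M *ᵥ v = hM.eigenvalues k • v := hM.mulVec_eigenvectorBasis k
  have heig : v ⬝ᵥ (M *ᵥ v) = hM.eigenvalues k := by
    rw [hMv, dotProduct_smul, smul_eq_mul, hvv, mul_one]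
  set w : Fin n → ℝ := fun i => |v i| with hw
  have hww : w ⬝ᵥ w = 1 := by
    rw [← hvv]
    exact Finset.sum_congr rfl fun i _ => abs_mul_abs_self _
  have hupper : hM.eigenvalues k < 1 := by
    have := rayleigh_le hM v
    rw [heig, hvv, mul_one] at this
    exact lt_of_le_of_lt this hstab
  have hlow : -(⨆ i, hM.eigenvalues i) ≤ hM.eigenvalues k := by
    have hwMw : w ⬝ᵥ (M *ᵥ w) ≤ ⨆ i, hM.eigenvalues i := by
      have := rayleigh_le hM w
      rwa [hww, mul_one] at this
    have hcmp : -(w ⬝ᵥ (M *ᵥ w)) ≤ v ⬝ᵥ (M *ᵥ v) := by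
      rw [neg_le]
      simp only [dotProduct, mulVec, dotProduct, Finset.mul_sum, ← Finset.sum_neg_distrib]
      refine Finset.sum_le_sum fun i _ => Finset.sum_le_sum fun j _ => ?_
      have : |v i * (M i j * v j)| = w i * (M i j * w j) := by
        rw [abs_mul, abs_mul, abs_of_nonneg (hMnn i j)]
      calc -(v i * (M i j * v j)) ≤ |v i * (M i j * v j)| := neg_le_abs _
        _ = w i * (M i j * w j) := this
    rw [heig] at hcmp
    exact le_trans (neg_le_neg hwMw) hcmp
  have hlower : -1 < hM.eigenvalues k := lt_of_lt_of_le (by linarith) hlow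
  exact abs_lt.mpr ⟨hlower, hupper⟩

/-- If the linearized SIS system matrix `M = (1-δ)I + βA` is stable (`λ_max(M) < 1`),
with `δ ∈ [0,1]`, `β ≥ 0`, `β·dᵢ ≤ 1`, then the nonlinear mean-field SIS recursion
`Q(t+1)ᵢ = (1-δ)Q(t)ᵢ + β(1-Q(t)ᵢ)(AQ(t))ᵢ` started in `[0,1]ⁿ` dies out: `Q(t) → 0`. -/
theorem sis_dies_out_of_linear_stability {n : ℕ}
    (G : SimpleGraph (Fin n)) [DecidableRel G.Adj]
    (δ β : ℝ) (hδ : δ ∈ Set.Icc (0 : ℝ) 1) (hβ : 0 ≤ β)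
    (hdeg : ∀ i : Fin n, β * G.degree i ≤ 1)
    (hM : ((1 - δ) • (1 : Matrix (Fin n) (Fin n) ℝ) + β • G.adjMatrix ℝ).IsHermitian)
    (hstab : (⨆ i, hM.eigenvalues i) < 1)
    (Q : ℕ → Fin n → ℝ) (hQ0 : ∀ i, Q 0 i ∈ Set.Icc (0 : ℝ) 1)
    (hrec : ∀ t i, Q (t + 1) i =
      (1 - δ) * Q t i + β * (1 - Q t i) * (G.adjMatrix ℝ).mulVec (Q t) i) :
    Tendsto Q atTop (nhds (0 : Fin n → ℝ)) := by
  obtain ⟨hδ0, hδ1⟩ := hδ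
  set M : Matrix (Fin n) (Fin n) ℝ := (1 - δ) • (1 : Matrix (Fin n) (Fin n) ℝ) + β • G.adjMatrix ℝ
    with hMdef
  have hMnn : ∀ i j, 0 ≤ M i j := by
    intro i j
    simp only [hMdef, Matrix.add_apply, Matrix.smul_apply, Matrix.one_apply,
      SimpleGraph.adjMatrix_apply, smul_eq_mul]
    split_ifs <;> simp <;> nlinarith
  have hMv : ∀ (x : Fin n → ℝ) (i : Fin n),
      (M *ᵥ x) i = (1 - δ) * x i + β * ((G.adjMatrix ℝ) *ᵥ x) i := by
    intro x i
    rw [hMdef, add_mulVec, smul_mulVec, smul_mulVec, one_mulVec]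
    simp
  -- adjacency bounds
  have hA0 : ∀ (x : Fin n → ℝ), (∀ j, 0 ≤ x j) → ∀ i, 0 ≤ ((G.adjMatrix ℝ) *ᵥ x) i := by
    intro x hx i
    rw [SimpleGraph.adjMatrix_mulVec_apply]
    exact Finset.sum_nonneg fun j _ => hx j
  have hA1 : ∀ (x : Fin n → ℝ), (∀ j, x j ≤ 1) → ∀ i, ((G.adjMatrix ℝ) *ᵥ x) i ≤ G.degree i := by
    intro x hx i
    rw [SimpleGraph.adjMatrix_mulVec_apply]
    calc ∑ j ∈ G.neighborFinset i, x j ≤ ∑ j ∈ G.neighborFinset i, (1:ℝ) :=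
          Finset.sum_le_sum fun j _ => hx j
      _ = ((G.neighborFinset i).card : ℝ) := by rw [Finset.sum_const, nsmul_eq_mul, mul_one]
      _ = G.degree i := by rw [SimpleGraph.card_neighborFinset_eq_degree]
  -- invariance of [0,1]
  have hInv : ∀ t i, Q t i ∈ Set.Icc (0:ℝ) 1 := by
    intro t
    induction t with
    | zero => exact hQ0
    | succ t ih =>
      intro i
      obtain ⟨h0, h1⟩ := ih i
      have hAi0 : 0 ≤ ((G.adjMatrix ℝ) *ᵥ (Q t)) i := hA0 _ (fun j => (ih j).1) i
      have hAi1 : ((G.adjMatrix ℝ) *ᵥ (Q t)) i ≤ G.degree i := hA1 _ (fun j => (ih j).2) i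
      have hβA : β * ((G.adjMatrix ℝ) *ᵥ (Q t)) i ≤ 1 :=
        le_trans (mul_le_mul_of_nonneg_left hAi1 hβ) (hdeg i)
      constructor
      · rw [hrec]
        have : 0 ≤ β * (1 - Q t i) * ((G.adjMatrix ℝ) *ᵥ (Q t)) i := by
          apply mul_nonneg (mul_nonneg hβ (by linarith)) hAi0
        nlinarith
      · rw [hrec]
        have h2 : β * (1 - Q t i) * ((G.adjMatrix ℝ) *ᵥ (Q t)) i ≤ (1 - Q t i) * 1 := by
          rw [mul_comm β (1 - Q t i), mul_assoc]
          exact mul_le_mul_of_nonneg_left hβA (by linarith)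
        nlinarith
  -- domination by the linear system
  have hDom : ∀ t i, Q t i ≤ ((M ^ t) *ᵥ Q 0) i := by
    intro t
    induction t with
    | zero => intro i; simp
    | succ t ih =>
      intro i
      have hAi0 : 0 ≤ ((G.adjMatrix ℝ) *ᵥ (Q t)) i := hA0 _ (fun j => (hInv t j).1) i
      have step1 : Q (t+1) i ≤ (M *ᵥ Q t) i := by
        rw [hrec, hMv]
        have : β * (1 - Q t i) * ((G.adjMatrix ℝ) *ᵥ (Q t)) i
            ≤ β * ((G.adjMatrix ℝ) *ᵥ (Q t)) i := by
          have h1 : (1 - Q t i) ≤ 1 := by linarith [(hInv t i).1]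
          have := mul_le_mul_of_nonneg_right
            (mul_le_mul_of_nonneg_left h1 hβ) hAi0
          calc β * (1 - Q t i) * ((G.adjMatrix ℝ) *ᵥ (Q t)) i
              ≤ β * 1 * ((G.adjMatrix ℝ) *ᵥ (Q t)) i := this
            _ = β * ((G.adjMatrix ℝ) *ᵥ (Q t)) i := by ring
        linarith
      have step2 : (M *ᵥ Q t) i ≤ (M *ᵥ ((M ^ t) *ᵥ Q 0)) i := by
        simp only [mulVec, dotProduct]
        exact Finset.sum_le_sum fun j _ => mul_le_mul_of_nonneg_left (ih j) (hMnn i j)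
      calc Q (t+1) i ≤ (M *ᵥ Q t) i := step1
        _ ≤ (M *ᵥ ((M ^ t) *ᵥ Q 0)) i := step2
        _ = ((M ^ (t+1)) *ᵥ Q 0) i := by rw [mulVec_mulVec, ← pow_succ']
  -- convergence
  rw [tendsto_pi_nhds]
  intro i
  have hg : Tendsto (fun t => ((M ^ t) *ᵥ Q 0) i) atTop (nhds 0) := by
    have hform : ∀ t, ((M ^ t) *ᵥ Q 0) i
        = ∑ k, (hM.eigenvectorBasis.repr (WithLp.toLp 2 (Q 0)) k * (⇑(hM.eigenvectorBasis k) : Fin n → ℝ) i) * hM.eigenvalues k ^ t := by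
      intro t
      have hpe := pow_mulVec_eigen hM (WithLp.toLp 2 (Q 0)) t
      simp only [WithLp.ofLp_toLp] at hpe
      rw [hpe]
      simp only [Finset.sum_apply, Pi.smul_apply, smul_eq_mul]
      exact Finset.sum_congr rfl fun k _ => by ring
    simp only [hform]
    have : Tendsto (fun t => ∑ k : Fin n,
        (hM.eigenvectorBasis.repr (WithLp.toLp 2 (Q 0)) k * (⇑(hM.eigenvectorBasis k) : Fin n → ℝ) i) * hM.eigenvalues k ^ t)
        atTop (nhds (∑ k : Fin n, (0:ℝ))) := by
      apply tendsto_finset_sum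
      intro k _
      have := (tendsto_pow_atTop_nhds_zero_of_abs_lt_one
        (eigen_abs_lt_one hM hMnn hstab k)).const_mul
        (hM.eigenvectorBasis.repr (WithLp.toLp 2 (Q 0)) k * (⇑(hM.eigenvectorBasis k) : Fin n → ℝ) i)
      simpa using this
    simpa using this
  exact squeeze_zero (fun t => (hInv t i).1) (fun t => hDom t i) hg
end

section
/- Let α, δ, λ, c be positive reals with 0 < λ < δ and α ≤ 1, and define S: [0,1] → ℝ by S(π) = π·c + (1−π)·α/(δ − λ(1−π)). Set a = α/δ and b = αδ/(δ−λ)², so a < b. Then S attains its minimum over [0,1] exactly as follows: if c ≤ a the minimum is attained at π = 1; if a < c < b the minimum is attained at the interior point π* = 1 − (δ − √(δα/c))/λ, which lies in (0,1); and if c ≥ b the minimum is attained at π = 0. -/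
open Set

private lemma S_eq_aux (α δ lam c π : ℝ) (hlam : lam ≠ 0) (ht : δ - lam * (1 - π) ≠ 0) :
    π * c + (1 - π) * α / (δ - lam * (1 - π)) =
      c - (c * δ + α) / lam + (c / lam) * (δ - lam * (1 - π)) +
        (α * δ / lam) / (δ - lam * (1 - π)) := by
  have ht' : δ - (1 - π) * lam ≠ 0 := by rwa [mul_comm]
  field_simp
  ring

private lemma h_mono_aux (A B t s : ℝ) (ht : 0 < t) (hs : 0 < s)
    (hsign : 0 ≤ (t - s) * (A * t * s - B)) :
    A * s + B / s ≤ A * t + B / t := by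
  rw [← sub_nonneg]
  have h : A * t + B / t - (A * s + B / s) = (t - s) * (A * t * s - B) / (t * s) := by
    field_simp
    ring
  rw [h]
  exact div_nonneg hsign (by positivity)

/-- Optimal one-shot random immunization on an Erdős–Rényi network: for
`S(π) = πc + (1-π)α/(δ - λ(1-π))` with `0 < λ < δ`, `0 < α ≤ 1`, `c > 0`, and
`a = α/δ`, `b = αδ/(δ-λ)²` (so `a < b`), the minimum of `S` over `[0,1]` is attained
at `π = 1` when `c ≤ a`, at the interior point `π* = 1 - (δ - √(δα/c))/λ ∈ (0,1)`
when `a < c < b`, and at `π = 0` when `c ≥ b`. -/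
theorem optimal_immunization_fraction
    (α δ lam c : ℝ) (hα : 0 < α) (hδ : 0 < δ) (hlam : 0 < lam) (hc : 0 < c)
    (hlamδ : lam < δ) (hα1 : α ≤ 1) :
    α / δ < α * δ / (δ - lam) ^ 2 ∧
    (c ≤ α / δ →
      IsMinOn (fun π : ℝ => π * c + (1 - π) * α / (δ - lam * (1 - π))) (Icc 0 1) 1) ∧
    (α / δ < c → c < α * δ / (δ - lam) ^ 2 →
      (1 - (δ - Real.sqrt (δ * α / c)) / lam ∈ Ioo (0 : ℝ) 1 ∧
        IsMinOn (fun π : ℝ => π * c + (1 - π) * α / (δ - lam * (1 - π))) (Icc 0 1)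
          (1 - (δ - Real.sqrt (δ * α / c)) / lam))) ∧
    (α * δ / (δ - lam) ^ 2 ≤ c →
      IsMinOn (fun π : ℝ => π * c + (1 - π) * α / (δ - lam * (1 - π))) (Icc 0 1) 0) := by
  have hδlam : 0 < δ - lam := by linarith
  refine ⟨?_, ?_, ?_, ?_⟩
  · -- a < b
    rw [div_lt_div_iff₀ hδ (by positivity)]
    nlinarith [mul_pos (mul_pos hα hlam) (show (0:ℝ) < 2 * δ - lam by linarith)]
  · -- c ≤ a : minimum at π = 1
    intro hca
    have hcδ : c * δ ≤ α := (le_div_iff₀ hδ).mp hca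
    rw [isMinOn_iff]
    intro x ⟨hx0, hx1⟩
    have htx : 0 < δ - lam * (1 - x) := by nlinarith
    have e1 : δ - lam * (1 - (1:ℝ)) = δ := by ring
    rw [S_eq_aux α δ lam c x hlam.ne' htx.ne', S_eq_aux α δ lam c 1 hlam.ne' (by rw [e1]; exact hδ.ne'),
      e1]
    set tx := δ - lam * (1 - x) with htxdef
    have htxδ : tx ≤ δ := by nlinarith
    have hsign : 0 ≤ (tx - δ) * ((c / lam) * tx * δ - α * δ / lam) := by
      have h2 : (c / lam) * tx * δ - α * δ / lam ≤ 0 := by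
        have e : (c / lam) * tx * δ - α * δ / lam = (c * tx * δ - α * δ) / lam := by ring
        rw [e]
        apply div_nonpos_of_nonpos_of_nonneg _ hlam.le
        nlinarith [mul_le_mul_of_nonneg_left htxδ hc.le]
      nlinarith [mul_nonneg (by linarith : (0:ℝ) ≤ δ - tx) (by linarith : (0:ℝ) ≤ -((c / lam) * tx * δ - α * δ / lam))]
    have := h_mono_aux (c / lam) (α * δ / lam) tx δ htx hδ hsign
    linarith
  · -- interior case
    intro hac hcb
    set s := Real.sqrt (δ * α / c) with hsdef
    have hspos : 0 < s := Real.sqrt_pos.mpr (by positivity)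
    have hs2 : s ^ 2 = δ * α / c := Real.sq_sqrt (by positivity)
    have hαcδ : α < c * δ := by
      rw [div_lt_iff₀ hδ] at hac; linarith
    have hcb' : c * (δ - lam) ^ 2 < α * δ :=
      (lt_div_iff₀ (by positivity : (0:ℝ) < (δ - lam) ^ 2)).mp hcb
    have hsδ : s < δ := by
      have : s ^ 2 < δ ^ 2 := by
        rw [hs2, div_lt_iff₀ hc]; nlinarith
      nlinarith
    have hsδlam : δ - lam < s := by
      have : (δ - lam) ^ 2 < s ^ 2 := by
        rw [hs2, lt_div_iff₀ hc]; nlinarith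
      nlinarith
    have hmem : 1 - (δ - s) / lam ∈ Ioo (0:ℝ) 1 := by
      constructor
      · have : (δ - s) / lam < 1 := by rw [div_lt_one hlam]; linarith
        linarith
      · have : 0 < (δ - s) / lam := div_pos (by linarith) hlam
        linarith
    refine ⟨hmem, ?_⟩
    rw [isMinOn_iff]
    intro x ⟨hx0, hx1⟩
    have htx : 0 < δ - lam * (1 - x) := by nlinarith
    have e1 : δ - lam * (1 - (1 - (δ - s) / lam)) = s := by field_simp; ring
    rw [S_eq_aux α δ lam c x hlam.ne' htx.ne',
      S_eq_aux α δ lam c (1 - (δ - s) / lam) hlam.ne' (by rw [e1]; exact hspos.ne'), e1]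
    set tx := δ - lam * (1 - x) with htxdef
    have hB : α * δ / lam = (c / lam) * s ^ 2 := by
      rw [hs2]; field_simp
    have hsign : 0 ≤ (tx - s) * ((c / lam) * tx * s - α * δ / lam) := by
      have : (tx - s) * ((c / lam) * tx * s - α * δ / lam) = (c / lam) * s * (tx - s) ^ 2 := by
        rw [hB]; ring
      rw [this]
      positivity
    have := h_mono_aux (c / lam) (α * δ / lam) tx s htx hspos hsign
    linarith
  · -- c ≥ b : minimum at π = 0
    intro hcb
    have hcb' : α * δ ≤ c * (δ - lam) ^ 2 := by
      rw [div_le_iff₀ (by positivity : (0:ℝ) < (δ - lam) ^ 2)] at hcb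
      linarith
    rw [isMinOn_iff]
    intro x ⟨hx0, hx1⟩
    have htx : 0 < δ - lam * (1 - x) := by nlinarith
    have e1 : δ - lam * (1 - (0:ℝ)) = δ - lam := by ring
    rw [S_eq_aux α δ lam c x hlam.ne' htx.ne',
      S_eq_aux α δ lam c 0 hlam.ne' (by rw [e1]; exact hδlam.ne'), e1]
    set tx := δ - lam * (1 - x) with htxdef
    have htxl : δ - lam ≤ tx := by nlinarith
    have hsign : 0 ≤ (tx - (δ - lam)) * ((c / lam) * tx * (δ - lam) - α * δ / lam) := by
      apply mul_nonneg (by linarith)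
      have : (c / lam) * tx * (δ - lam) - α * δ / lam = (c * tx * (δ - lam) - α * δ) / lam := by
        ring
      rw [this]
      apply div_nonneg _ hlam.le
      nlinarith [mul_le_mul_of_nonneg_left htxl (mul_pos hc hδlam).le]
    have := h_mono_aux (c / lam) (α * δ / lam) tx (δ - lam) htx hδlam hsign
    linarith
end
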